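/- Let S be a linearly ordered type, and let W : S → Set S be a family of 'witness' sets with x ∉ W x for all x. Define the partial binary function σ : (S × S) → (S × S) → Option (S × S) by: σ (x, w) (y, u) = some (x, min w u) if x = y, w ∈ W x, and u ∈ W x; σ (x, w) (y, u) = some (x, x) if x = y and either (w = x and u ∈ W x) or (w ∈ W x and u = x); and σ (x, w) (y, u) = none otherwise. Then σ is associative and commutative (with respect to the none-extension σ̂). -/
import Mathlib


open scoped Classical

/-- The `none`-extension of a partial binary function. -/
def ext {X : Type*} (σ : X → X → Option X) : Option X → Option X → Option X
  | some a, some b => σ a b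
  | _, _ => none

/-- The witness construction. -/
noncomputable def wsig {S : Type*} [LinearOrder S] (W : S → Set S) :
    S × S → S × S → Option (S × S) := fun p q =>
  if p.1 = q.1 ∧ p.2 ∈ W p.1 ∧ q.2 ∈ W p.1 then some (p.1, min p.2 q.2)
  else if p.1 = q.1 ∧ ((p.2 = p.1 ∧ q.2 ∈ W p.1) ∨ (p.2 ∈ W p.1 ∧ q.2 = p.1)) then
    some (p.1, p.1)
  else none

private lemma ext_none_l {X : Type*} (σ : X → X → Option X) (b : Option X) :
    ext σ none b = none := by cases b <;> rfl

private lemma ext_none_r {X : Type*} (σ : X → X → Option X) (a : Option X) :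
    ext σ a none = none := by cases a <;> rfl

private lemma wsig_fst {S : Type*} [LinearOrder S] (W : S → Set S) {p q r : S × S}
    (h : wsig W p q = some r) : r.1 = p.1 := by
  unfold wsig at h
  split_ifs at h <;>
    first
      | (injection h with h; subst h; rfl)
      | exact Option.noConfusion h

private lemma wsig_ne {S : Type*} [LinearOrder S] (W : S → Set S) {p q : S × S}
    (h : p.1 ≠ q.1) : wsig W p q = none := by
  unfold wsig
  split_ifs <;> tauto

theorem wsig_assoc_comm {S : Type*} [LinearOrder S] (W : S → Set S)
    (hW : ∀ x : S, x ∉ W x) :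
    (∀ x y z : S × S,
      ext (wsig W) (ext (wsig W) (some x) (some y)) (some z)
        = ext (wsig W) (some x) (ext (wsig W) (some y) (some z)))
    ∧ (∀ x y : S × S, wsig W x y = wsig W y x) := by
  constructor
  · rintro ⟨a,w⟩ ⟨b,u⟩ ⟨c,v⟩
    show ext (wsig W) (wsig W (a,w) (b,u)) (some (c,v))
        = ext (wsig W) (some (a,w)) (wsig W (b,u) (c,v))
    by_cases hab : a = b
    · subst hab
      by_cases hac : a = c
      · subst hac
        -- all first coordinates equal
        have hm : ∀ s t : S, s ∈ W a → t ∈ W a → min s t ∈ W a := by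
          intro s t hs ht
          rcases min_cases s t with ⟨h,_⟩|⟨h,_⟩ <;> rw [h] <;> assumption
        have tri : ∀ s : S, s ∈ W a ∨ s = a ∨ (s ∉ W a ∧ s ≠ a) := by
          intro s; tauto
        rcases tri w with hw | hw | ⟨hw1, hw2⟩ <;>
          rcases tri u with hu | hu | ⟨hu1, hu2⟩ <;>
            rcases tri v with hv | hv | ⟨hv1, hv2⟩ <;>
              simp [ext, wsig, hm, hW a, *, min_assoc]
      · -- a = b, a ≠ c : both sides none
        have h1 : wsig W (a,u) (c,v) = none := wsig_ne W hac
        rw [h1, ext_none_r]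
        rcases h : wsig W (a,w) (a,u) with _ | p
        · rw [ext_none_l]
        · have : p.1 = a := wsig_fst W h
          show wsig W p (c,v) = none
          exact wsig_ne W (by rw [this]; exact hac)
    · -- a ≠ b : both sides none
      have h1 : wsig W (a,w) (b,u) = none := wsig_ne W hab
      rw [h1, ext_none_l]
      rcases h : wsig W (b,u) (c,v) with _ | p
      · rw [ext_none_r]
      · have : p.1 = b := wsig_fst W h
        show none = wsig W (a,w) p
        exact (wsig_ne W (by rw [this]; exact hab)).symm
  · rintro ⟨a,w⟩ ⟨b,u⟩
    by_cases hab : a = b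
    · subst hab
      have tri : ∀ s : S, s ∈ W a ∨ s = a ∨ (s ∉ W a ∧ s ≠ a) := by
        intro s; tauto
      rcases tri w with hw | hw | ⟨hw1, hw2⟩ <;>
        rcases tri u with hu | hu | ⟨hu1, hu2⟩ <;>
          simp [wsig, hW a, *, min_comm]
    · rw [wsig_ne W hab, wsig_ne W (Ne.symm hab)]
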